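/- Let k be a field, V a nonzero k-vector space, and R a unital k-subalgebra of End_k(V). Suppose there exist a two-sided ideal I of R that is topologically nilpotent as a set, and a set Ω, such that R/I is isomorphic to the product algebra k^Ω as topological k-algebras, where R carries the subspace topology induced by the function topology, R/I the quotient topology, and k^Ω the product topology with each factor k discrete. Then R is triangularizable, and I = TNil(R), the set of topologically nilpotent elements of R. -/

import Mathlib

/-! Triangularizability follows from a transfinite greedy construction once every proper
`R`-invariant subspace `W` admits a common eigenvector of `R` modulo `W`. To find one, pick
`v₀ ∉ W` with `I v₀ ⊆ W` (a topologically nilpotent set cannot keep a vector outside `W`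
forever). The subspace `{S | S v₀ ∈ W}` is open in `R`, so its image under `φ` is an open
subspace of `k^Ω`; it does not contain `1` because `1 + I` acts unipotently, so it misses some
coordinate idempotent `e_ω`, and `E v₀` works for any preimage `E` of `e_ω`, with eigenvalue
`φ(T)_ω`.

Elements of `I` are pointwise nilpotent; conversely, if `x` is, then `xⁿ → 0`, so
`φ(x)ⁿ → 0` in the discrete product, which forces `φ(x) = 0`. -/

universe u v w

variable {k : Type u} [Field k]

/-- The function (finite/pointwise) topology on `End_k(V)`: the topology induced from the
product topology on `V → V` where `V` carries the discrete topology. -/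
instance endFunctionTopology {V : Type v} [AddCommGroup V] [Module k V] :
    TopologicalSpace (Module.End k V) :=
  TopologicalSpace.induced (fun T => (T : V → V))
    (@Pi.topologicalSpace V (fun _ => V) (fun _ => ⊥))

/-- The product topology on `Ω → k` where each factor `k` is discrete. -/
def discretePiTopology (Ω K : Type*) : TopologicalSpace (Ω → K) :=
  @Pi.topologicalSpace Ω (fun _ => K) (fun _ => ⊥)

/-- `seqProd f n = f (n-1) * ⋯ * f 1 * f 0`, the composition `Tₙ ⋯ T₂ T₁` of the first `n`
terms of the sequence `f` (and the identity for `n = 0`). -/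
def seqProd {V : Type v} [AddCommGroup V] [Module k V]
    (f : ℕ → Module.End k V) : ℕ → Module.End k V
  | 0 => 1
  | n + 1 => f n * seqProd f n

/-- A subset `X ⊆ End_k(V)` is topologically nilpotent if for every sequence of elements of
`X` and every finite-dimensional subspace `W` of `V`, some initial composition
`Tₙ ⋯ T₂ T₁` annihilates `W`. -/
def IsTopNilpotentSet {V : Type v} [AddCommGroup V] [Module k V]
    (X : Set (Module.End k V)) : Prop :=
  ∀ f : ℕ → Module.End k V, (∀ n, f n ∈ X) →
    ∀ W : Submodule k V, FiniteDimensional k ↥W →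
      ∃ n : ℕ, 0 < n ∧ ∀ w ∈ W, seqProd f n w = 0

open Module Submodule Set

section Triangularization

variable {V : Type v} [AddCommGroup V] [Module k V]

theorem linearIndependent_of_notMem_span_image_Iio {ι : Type*} [LinearOrder ι] {g : ι → V}
    (hg : ∀ i, g i ∉ span k (g '' Iio i)) : LinearIndependent k g := by
  classical
  refine linearIndependent_iff_finset_linearIndependent.mpr fun s => ?_
  induction s using Finset.induction_on_max with
  | empty => exact linearIndependent_empty_type
  | insert a s has ih =>
    change LinearIndepOn k g ↑(insert a s)
    rw [Finset.coe_insert, linearIndepOn_insert fun h => (has a h).false]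
    exact ⟨ih, fun h => hg a (span_mono (image_mono has) h)⟩

theorem exists_triangular_basis_of_wellFoundedLT (X : Set (End k V)) {ι' : Type*}
    [LinearOrder ι'] [WellFoundedLT ι'] (b : Basis ι' k V)
    (hb : ∀ T ∈ X, ∀ i, T (b i) ∈ span k (b '' Iic i)) :
    ∃ (ι : Type v) (lo : LinearOrder ι), WellFounded lo.lt ∧
      ∃ b : Basis ι k V, ∀ T ∈ X, ∀ i : ι, T (b i) ∈ span k (b '' {j | lo.le j i}) := by
  let e := Equiv.ofInjective b b.injective
  refine ⟨range b, LinearOrder.lift' e.symm e.symm.injective,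
    InvImage.wf e.symm wellFounded_lt, b.reindex e, fun T hT i => ?_⟩
  have himage : (b.reindex e) '' {j | e.symm j ≤ e.symm i} = b '' Iic (e.symm i) := by
    rw [show ⇑(b.reindex e) = b ∘ e.symm from funext (b.reindex_apply e), image_comp,
      show {j | e.symm j ≤ e.symm i} = e.symm ⁻¹' Iic (e.symm i) from rfl,
      e.symm.image_preimage]
  change T (b.reindex e i) ∈ span k ((b.reindex e) '' {j | e.symm j ≤ e.symm i})
  rw [b.reindex_apply, himage]
  exact hb T hT _

def IsEigenvectorMod (X : Set (End k V)) (W : Submodule k V) (v : V) : Prop :=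
  v ∉ W ∧ ∀ T ∈ X, ∃ c : k, T v - c • v ∈ W

noncomputable def transfiniteSeq (E : Submodule k V → V) : Ordinal.{v} → V :=
  Ordinal.lt_wf.fix fun α seq => E (span k (range fun β : Iio α => seq β.1 β.2))

def transfiniteSpan (E : Submodule k V → V) (α : Ordinal.{v}) : Submodule k V :=
  span k (transfiniteSeq E '' Iio α)

variable {E : Submodule k V → V}

theorem transfiniteSeq_eq (α : Ordinal.{v}) : transfiniteSeq E α = E (transfiniteSpan E α) := by
  rw [transfiniteSeq, WellFounded.fix_eq, transfiniteSpan, image_eq_range]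
  rfl

theorem transfiniteSpan_mono : Monotone (transfiniteSpan E) := fun _ _ h =>
  span_mono (image_mono (Iio_subset_Iio h))

theorem transfiniteSeq_mem_transfiniteSpan {α β : Ordinal.{v}} (h : β < α) :
    transfiniteSeq E β ∈ transfiniteSpan E α :=
  subset_span ⟨β, h, rfl⟩

variable {X : Set (End k V)}

theorem transfiniteSpan_invariant
    (hE : ∀ W : Submodule k V, (∀ T ∈ X, ∀ w ∈ W, T w ∈ W) → W ≠ ⊤ →
      IsEigenvectorMod X W (E W)) (α : Ordinal.{v}) :
    ∀ T ∈ X, ∀ w ∈ transfiniteSpan E α, T w ∈ transfiniteSpan E α := by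
  induction α using WellFoundedLT.induction with
  | _ α ih =>
  intro T hT w hw
  by_cases htop : transfiniteSpan E α = ⊤
  · simp [htop]
  suffices transfiniteSpan E α ≤ (transfiniteSpan E α).comap T from this hw
  refine span_le.mpr ?_
  rintro _ ⟨β, hβ, rfl⟩
  have hβtop : transfiniteSpan E β ≠ ⊤ :=
    fun h => htop (top_le_iff.mp (h ▸ transfiniteSpan_mono hβ.le))
  obtain ⟨c, hc⟩ := (transfiniteSeq_eq (E := E) β ▸ hE _ (ih β hβ) hβtop).2 T hT
  rw [SetLike.mem_coe, mem_comap, ← sub_add_cancel (T _) (c • _)]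
  exact add_mem (transfiniteSpan_mono hβ.le hc)
    (smul_mem _ c (transfiniteSeq_mem_transfiniteSpan hβ))

theorem isEigenvectorMod_transfiniteSeq
    (hE : ∀ W : Submodule k V, (∀ T ∈ X, ∀ w ∈ W, T w ∈ W) → W ≠ ⊤ →
      IsEigenvectorMod X W (E W))
    {α : Ordinal.{v}} (hα : transfiniteSpan E α ≠ ⊤) :
    IsEigenvectorMod X (transfiniteSpan E α) (transfiniteSeq E α) :=
  transfiniteSeq_eq (E := E) α ▸ hE _ (transfiniteSpan_invariant hE α) hα

theorem exists_transfiniteSpan_eq_top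
    (hE : ∀ W : Submodule k V, (∀ T ∈ X, ∀ w ∈ W, T w ∈ W) → W ≠ ⊤ →
      IsEigenvectorMod X W (E W)) : ∃ α : Ordinal.{v}, transfiniteSpan E α = ⊤ := by
  by_contra! hne
  have hinj : Function.Injective (transfiniteSeq E) := by
    intro α β hαβ
    by_contra h
    rcases lt_or_gt_of_ne h with h | h
    · exact (isEigenvectorMod_transfiniteSeq hE (hne β)).1
        (hαβ ▸ transfiniteSeq_mem_transfiniteSpan h)
    · exact (isEigenvectorMod_transfiniteSeq hE (hne α)).1
        (hαβ.symm ▸ transfiniteSeq_mem_transfiniteSpan h)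
  exact not_small_ordinal.{v, v} (small_of_injective hinj)

theorem exists_triangular_basis_of_forall_exists_isEigenvectorMod (X : Set (End k V))
    (H : ∀ W : Submodule k V, (∀ T ∈ X, ∀ w ∈ W, T w ∈ W) → W ≠ ⊤ → ∃ v, IsEigenvectorMod X W v) :
    ∃ (ι : Type v) (lo : LinearOrder ι), WellFounded lo.lt ∧
      ∃ b : Basis ι k V, ∀ T ∈ X, ∀ i : ι, T (b i) ∈ span k (b '' {j | lo.le j i}) := by
  choose! E hE using H
  set g := transfiniteSeq E
  obtain ⟨μ, hμ, hmin⟩ := wellFounded_lt.has_min _ (exists_transfiniteSpan_eq_top hE)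
  have hg : ∀ α : Iio μ, IsEigenvectorMod X (transfiniteSpan E α) (g α) := fun α =>
    isEigenvectorMod_transfiniteSeq hE fun h => hmin α h α.2
  have hli : LinearIndependent k fun α : Iio μ => g α :=
    linearIndependent_of_notMem_span_image_Iio fun α h => (hg α).1 <|
      span_mono (by rintro _ ⟨β, hβ, rfl⟩; exact ⟨β, hβ, rfl⟩) h
  have hsp : ⊤ ≤ span k (range fun α : Iio μ => g α) := by
    rw [← image_eq_range, ← hμ]; rfl
  let b := Basis.mk hli hsp
  refine exists_triangular_basis_of_wellFoundedLT X b fun T hT α => ?_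
  have hle : transfiniteSpan E α ≤ span k (b '' Iic α) := span_mono <| by
    rintro _ ⟨β, hβ, rfl⟩
    exact ⟨⟨β, mem_Iio.mpr (lt_trans hβ α.2)⟩, mem_Iic.mpr (le_of_lt hβ),
      Basis.mk_apply hli hsp _⟩
  obtain ⟨c, hc⟩ := (hg α).2 T hT
  rw [Basis.mk_apply, ← sub_add_cancel (T _) (c • _)]
  exact add_mem (hle hc) (smul_mem _ c (subset_span ⟨α, self_mem_Iic, Basis.mk_apply hli hsp α⟩))

end Triangularization

open Filter Topology

section FunctionTopology

variable {V : Type v} [AddCommGroup V] [Module k V]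

theorem Module.End.tendsto_nhds_iff {α : Type*} {l : Filter α} {f : α → End k V} {T : End k V} :
    Tendsto f l (𝓝 T) ↔ ∀ v, ∀ᶠ a in l, f a v = T v := by
  let _ : TopologicalSpace V := ⊥
  have : DiscreteTopology V := ⟨rfl⟩
  rw [nhds_induced, tendsto_comap_iff, tendsto_pi_nhds]
  simp only [nhds_discrete, tendsto_pure, Function.comp_apply]

theorem Module.End.isOpen_setOf_apply_mem (v : V) (s : Set V) :
    IsOpen {T : End k V | T v ∈ s} := by
  let _ : TopologicalSpace V := ⊥
  have : DiscreteTopology V := ⟨rfl⟩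
  exact (isOpen_discrete s).preimage ((continuous_apply v).comp continuous_induced_dom)

theorem Module.End.tendsto_pow_nhds_zero {T : End k V} (hT : ∀ v, ∃ m, 0 < m ∧ (T ^ m) v = 0) :
    Tendsto (T ^ ·) atTop (𝓝 0) := by
  refine Module.End.tendsto_nhds_iff.mpr fun v => ?_
  obtain ⟨m, -, hm⟩ := hT v
  filter_upwards [eventually_ge_atTop m] with n hn
  rw [← Nat.sub_add_cancel hn, pow_add, End.mul_apply, hm, map_zero, LinearMap.zero_apply]

end FunctionTopology

section DiscretePi

variable {Ω K : Type*}

theorem eq_zero_of_tendsto_pow_discretePiTopology [MonoidWithZero K] [IsReduced K]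
    {y : Ω → K} (hy : Tendsto (y ^ ·) atTop (@nhds _ (discretePiTopology Ω K) 0)) : y = 0 := by
  let _ : TopologicalSpace K := ⊥
  have : DiscreteTopology K := ⟨rfl⟩
  rw [discretePiTopology, tendsto_pi_nhds] at hy
  funext a
  obtain ⟨n, hn⟩ := (tendsto_pure.mp (nhds_discrete K ▸ hy a)).exists
  exact IsNilpotent.eq_zero ⟨n, hn⟩

theorem exists_finset_forall_eq_mem_of_isOpen_discretePiTopology {s : Set (Ω → K)}
    (hs : IsOpen[discretePiTopology Ω K] s) {y : Ω → K} (hy : y ∈ s) :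
    ∃ F : Finset Ω, ∀ z, (∀ a ∈ F, z a = y a) → z ∈ s := by
  let _ : TopologicalSpace K := ⊥
  obtain ⟨F, u, hu, hsub⟩ := isOpen_pi_iff.mp hs y hy
  exact ⟨F, fun z hz => hsub fun a ha => hz a ha ▸ (hu a ha).2⟩

theorem Submodule.exists_single_notMem [DecidableEq Ω] [Ring K] {P : Submodule K (Ω → K)}
    {F : Finset Ω} (hF : ∀ z : Ω → K, (∀ a ∈ F, z a = 0) → z ∈ P) (h1 : 1 ∉ P) :
    ∃ a ∈ F, Pi.single a 1 ∉ P := by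
  by_contra! hsingle
  refine h1 (sub_add_cancel (1 : Ω → K) (∑ a ∈ F, Pi.single a 1) ▸
    add_mem (hF _ fun a ha => ?_) (sum_mem hsingle))
  simp [ha]

end DiscretePi

theorem Module.End.mem_of_add_apply_mem {R M : Type*} [Ring R] [AddCommGroup M] [Module R M]
    {T : End R M} {W : Submodule R M} (hW : ∀ w ∈ W, T w ∈ W) {m : ℕ} {v : M}
    (hm : (T ^ m) v = 0) (hv : v + T v ∈ W) : v ∈ W := by
  have key : ∀ n : ℕ, v - ((-T) ^ n) v ∈ W := by
    intro n
    induction n with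
    | zero => simp
    | succ n ih =>
      have : v - ((-T) ^ (n + 1)) v = (v + T v) - T (v - ((-T) ^ n) v) := by
        rw [pow_succ']
        simp only [End.mul_apply, LinearMap.neg_apply, map_sub]
        abel
      exact this ▸ sub_mem hv (hW _ ih)
  have h := key m
  rw [neg_pow T m, End.mul_apply, hm, map_zero, sub_zero] at h
  exact h

section TopNilpotent

variable {V : Type v} [AddCommGroup V] [Module k V] {X : Set (End k V)}

theorem seqProd_const (T : End k V) (n : ℕ) : seqProd (fun _ => T) n = T ^ n := by
  induction n with
  | zero => rfl
  | succ n ih => rw [seqProd, ih, pow_succ']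

theorem IsTopNilpotentSet.exists_pow_apply_eq_zero (hX : IsTopNilpotentSet X) {T : End k V}
    (hT : T ∈ X) (v : V) : ∃ m, 0 < m ∧ (T ^ m) v = 0 := by
  obtain ⟨n, hn, h⟩ := hX (fun _ => T) (fun _ => hT) (k ∙ v) inferInstance
  exact ⟨n, hn, seqProd_const T n ▸ h v (mem_span_singleton_self v)⟩

theorem IsTopNilpotentSet.exists_notMem_forall_apply_mem (hX : IsTopNilpotentSet X)
    {W : Submodule k V} (hW : W ≠ ⊤) : ∃ v ∉ W, ∀ T ∈ X, T v ∈ W := by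
  by_contra! h
  obtain ⟨v₀, hv₀⟩ : ∃ v, v ∉ W := by simpa [eq_top_iff'] using hW
  choose next hnextX hnext using fun v : {v // v ∉ W} => h v v.2
  let orbit : ℕ → {v // v ∉ W} := fun n => Nat.rec ⟨v₀, hv₀⟩ (fun _ v => ⟨next v v, hnext v⟩) n
  have horbit : ∀ n, seqProd (fun n => next (orbit n)) n v₀ = (orbit n).1 := by
    intro n
    induction n with
    | zero => rfl
    | succ n ih => rw [seqProd, End.mul_apply, ih]
  obtain ⟨n, -, hn⟩ := hX _ (fun n => hnextX (orbit n)) (k ∙ v₀) inferInstance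
  exact (orbit n).2 (horbit n ▸ hn v₀ (mem_span_singleton_self v₀) ▸ W.zero_mem)

end TopNilpotent

section QuotientProduct

variable {V : Type v} [AddCommGroup V] [Module k V] {R : Subalgebra k (End k V)} {Ω : Type w}
  {φ : R →ₐ[k] (Ω → k)}

theorem apply_eq_zero_of_forall_exists_pow_apply_eq_zero
    (hcont : @Continuous R (Ω → k) _ (discretePiTopology Ω k) φ) {x : R}
    (hx : ∀ v, ∃ m, 0 < m ∧ ((x : Module.End k V) ^ m) v = 0) : φ x = 0 := by
  let _ : TopologicalSpace (Ω → k) := discretePiTopology Ω k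
  have hpow : Tendsto (x ^ ·) atTop (𝓝 0) :=
    tendsto_subtype_rng.mpr (by simpa using Module.End.tendsto_pow_nhds_zero hx)
  have h := (hcont.tendsto 0).comp hpow
  rw [map_zero] at h
  exact eq_zero_of_tendsto_pow_discretePiTopology
    (by simpa only [Function.comp_def, map_pow] using h)

theorem exists_isEigenvectorMod {I : TwoSidedIdeal R}
    (hI : IsTopNilpotentSet {T : End k V | ∃ S : R, S ∈ I ∧ (S : End k V) = T})
    (hsurj : Function.Surjective φ) (hker : ∀ x : R, φ x = 0 ↔ x ∈ I)
    (hopen : @IsOpenMap R (Ω → k) _ (discretePiTopology Ω k) φ) {W : Submodule k V}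
    (hWinv : ∀ T ∈ (R : Set (End k V)), ∀ w ∈ W, T w ∈ W) (hW : W ≠ ⊤) :
    ∃ v, IsEigenvectorMod (R : Set (End k V)) W v := by
  classical
  obtain ⟨v₀, hv₀, hIv₀⟩ := hI.exists_notMem_forall_apply_mem hW
  let A : Submodule k R := W.comap ((LinearMap.applyₗ v₀).comp R.val.toLinearMap)
  have hAopen : IsOpen (A : Set R) :=
    (Module.End.isOpen_setOf_apply_mem v₀ W).preimage continuous_subtype_val
  let P := A.map φ.toLinearMap
  obtain ⟨F, hF⟩ := exists_finset_forall_eq_mem_of_isOpen_discretePiTopology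
    (s := P) (by simpa [P] using hopen _ hAopen) P.zero_mem
  have hone : 1 ∉ P := by
    rintro ⟨S, hSA, hS⟩
    have hSI : S - 1 ∈ I := (hker _).mp (by simp_all)
    obtain ⟨m, -, hm⟩ := hI.exists_pow_apply_eq_zero ⟨S - 1, hSI, rfl⟩ v₀
    exact hv₀ (Module.End.mem_of_add_apply_mem (hWinv _ (S - 1).2) hm (by simpa [A] using hSA))
  obtain ⟨ω, -, hω⟩ := Submodule.exists_single_notMem hF hone
  obtain ⟨E, hE⟩ := hsurj (Pi.single ω 1)
  refine ⟨(E : End k V) v₀, fun h => hω ⟨E, h, hE⟩, fun T hT => ⟨φ ⟨T, hT⟩ ω, ?_⟩⟩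
  have hmem : ⟨T, hT⟩ * E - φ ⟨T, hT⟩ ω • E ∈ I := (hker _).mp <| by
    ext a
    by_cases ha : a = ω <;> simp [hE, ha]
  exact hIv₀ _ ⟨_, hmem, rfl⟩

end QuotientProduct

theorem stmt_14_general {V : Type v} [AddCommGroup V] [Module k V]
    (R : Subalgebra k (Module.End k V)) (I : TwoSidedIdeal R)
    (hI : IsTopNilpotentSet
      {T : Module.End k V | ∃ S : R, S ∈ I ∧ (S : Module.End k V) = T})
    (Ω : Type w) (φ : R →ₐ[k] (Ω → k))
    (hsurj : Function.Surjective ⇑φ)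
    (hker : ∀ x : R, φ x = 0 ↔ x ∈ I)
    (hcont : @Continuous ↥R (Ω → k) inferInstance (discretePiTopology Ω k) ⇑φ)
    (hopen : @IsOpenMap ↥R (Ω → k) inferInstance (discretePiTopology Ω k) ⇑φ) :
    (∃ (ι : Type v) (lo : LinearOrder ι), WellFounded lo.lt ∧
      ∃ b : Module.Basis ι k V, ∀ T ∈ (R : Set (Module.End k V)), ∀ i : ι,
        T (b i) ∈ Submodule.span k (⇑b '' {j | lo.le j i})) ∧
    (∀ x : R, x ∈ I ↔
      ∀ v : V, ∃ m : ℕ, 0 < m ∧ ((x : Module.End k V) ^ m) v = 0) :=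
  ⟨exists_triangular_basis_of_forall_exists_isEigenvectorMod _ fun _ hWinv hW =>
      exists_isEigenvectorMod hI hsurj hker hopen hWinv hW,
    fun x => ⟨fun hx => hI.exists_pow_apply_eq_zero ⟨x, hx, rfl⟩,
      fun hx => (hker x).mp (apply_eq_zero_of_forall_exists_pow_apply_eq_zero hcont hx)⟩⟩

/-- if `R` is a unital `k`-subalgebra of `End_k(V)` with a topologically
nilpotent two-sided ideal `I` such that `R/I ≅ k^Ω` as topological `k`-algebras (here
witnessed by a surjective, continuous, open `k`-algebra homomorphism `φ : R → k^Ω` with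
kernel `I`, `R` carrying the topology induced by the function topology and `k^Ω` the
product topology with `k` discrete), then `R` is triangularizable and `I = TNil(R)`. -/
theorem stmt_14 {V : Type v} [AddCommGroup V] [Module k V] [Nontrivial V]
    (R : Subalgebra k (Module.End k V)) (I : TwoSidedIdeal R)
    (hI : IsTopNilpotentSet
      {T : Module.End k V | ∃ S : R, S ∈ I ∧ (S : Module.End k V) = T})
    (Ω : Type w) (φ : R →ₐ[k] (Ω → k))
    (hsurj : Function.Surjective ⇑φ)
    (hker : ∀ x : R, φ x = 0 ↔ x ∈ I)
    (hcont : @Continuous ↥R (Ω → k) inferInstance (discretePiTopology Ω k) ⇑φ)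
    (hopen : @IsOpenMap ↥R (Ω → k) inferInstance (discretePiTopology Ω k) ⇑φ) :
    (∃ (ι : Type v) (lo : LinearOrder ι), WellFounded lo.lt ∧
      ∃ b : Module.Basis ι k V, ∀ T ∈ (R : Set (Module.End k V)), ∀ i : ι,
        T (b i) ∈ Submodule.span k (⇑b '' {j | lo.le j i})) ∧
    (∀ x : R, x ∈ I ↔
      ∀ v : V, ∃ m : ℕ, 0 < m ∧ ((x : Module.End k V) ^ m) v = 0) :=
  stmt_14_general R I hI Ω φ hsurj hker hcont hopen
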